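/- Star-structure theorem: Given any instance (G = (V, E, α), k) of Broadcast Improvement with optimum broadcast β*, there exist at most 2k − 1 edge additions E' ⊆ V² ∖ E, all incident to a single shared vertex (i.e., forming a star), such that the broadcast of G + E' is at least β*α² / (12k² + 3). -/

import Mathlib

open scoped Classical

variable {V : Type*} [Fintype V] [DecidableEq V]

/-- The proximity of `u` and `v` in the information graph `(V, E, α)`: the probability
that `u` and `v` are connected in a graph obtained by retaining each edge of `E`
independently with probability `α`. -/
noncomputable def prox (E : Finset (Sym2 V)) (α : ℝ) (u v : V) : ℝ :=
  ∑ F ∈ E.powerset,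
    if (SimpleGraph.fromEdgeSet (F : Set (Sym2 V))).Reachable u v then
      α ^ F.card * (1 - α) ^ (E \ F).card
    else 0

/-- The broadcast of an information graph: the minimum proximity over pairs of distinct
vertices. -/
noncomputable def broadcast (E : Finset (Sym2 V)) (α : ℝ) : ℝ :=
  ⨅ p : {p : V × V // p.1 ≠ p.2}, prox E α p.1.1 p.1.2

/-- The optimum broadcast achievable by adding at most `k` vertex pairs disjoint from `E`. -/
noncomputable def optBroadcast (E : Finset (Sym2 V)) (α : ℝ) (k : ℕ) : ℝ :=
  ⨆ F : {F : Finset (Sym2 V) // F.card ≤ k ∧ ∀ e ∈ F, e ∉ E}, broadcast (E ∪ F.1) α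

/-- The reach of a vertex `v`: the minimum proximity of `v` to any other vertex. -/
noncomputable def reach (E : Finset (Sym2 V)) (α : ℝ) (v : V) : ℝ :=
  ⨅ u : {u : V // u ≠ v}, prox E α v u.1

/-- The optimum reach of a source vertex `vs` achievable by adding at most `k`
vertex pairs disjoint from `E`. -/
noncomputable def optReach (E : Finset (Sym2 V)) (α : ℝ) (k : ℕ) (vs : V) : ℝ :=
  ⨆ F : {F : Finset (Sym2 V) // F.card ≤ k ∧ ∀ e ∈ F, e ∉ E}, reach (E ∪ F.1) α vs

/-- The probability that, in a sampled graph, all edges of at least one member of the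
family `P` of edge-lists are retained. -/
noncomputable def prPaths (E : Finset (Sym2 V)) (α : ℝ) (P : Set (List (Sym2 V))) : ℝ :=
  ∑ F ∈ E.powerset,
    if ∃ p ∈ P, ∀ e ∈ p, e ∈ F then α ^ F.card * (1 - α) ^ (E \ F).card
    else 0

/-!
Let `F` be an optimal set of at most `k` new edges and `W` the set of at most `2k` endpoints of
edges of `F`. In a sample of `E ∪ F`, a `u`–`v` path either uses only edges of `E`, or its first
and last `F`-edges show that `u` and `v` both reach `W` in the sample of `E`; by a union bound the
latter has probability at most `∑_{a, b ∈ W} P(u ⇝ a ∧ v ⇝ b)`. Now replace `F` by the star `S`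
joining a vertex `w ∈ W` to the rest of `W`: the event `u ⇝ a ∧ v ⇝ b` in `E`, together with the
independent retention (probability `≥ α²`) of the star edges `wa` and `wb`, connects `u` to `v`.
Hence `β* α² ≤ (|W|² + 1) · prox_{E ∪ S}(u, v) ≤ (4k² + 1) · prox_{E ∪ S}(u, v)`.
-/

section Sampling

variable {ι : Type*} [DecidableEq ι] {α : ℝ}

noncomputable def sampleWeight (α : ℝ) (E F : Finset ι) : ℝ :=
  α ^ F.card * (1 - α) ^ (E \ F).card

noncomputable def sampleProb (α : ℝ) (E : Finset ι) (P : Finset ι → Prop) : ℝ :=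
  ∑ F ∈ E.powerset, if P F then sampleWeight α E F else 0

lemma sampleWeight_nonneg (h0 : 0 ≤ α) (h1 : α ≤ 1) (E F : Finset ι) :
    0 ≤ sampleWeight α E F :=
  mul_nonneg (pow_nonneg h0 _) (pow_nonneg (sub_nonneg.2 h1) _)

lemma sum_sampleWeight (E : Finset ι) : ∑ F ∈ E.powerset, sampleWeight α E F = 1 :=
  calc ∑ F ∈ E.powerset, sampleWeight α E F
      = ∑ F ∈ E.powerset, α ^ F.card * (1 - α) ^ (E.card - F.card) :=
        Finset.sum_congr rfl fun F hF => by
          rw [sampleWeight, Finset.card_sdiff_of_subset (Finset.mem_powerset.1 hF)]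
    _ = 1 := by rw [Finset.sum_pow_mul_eq_add_pow, add_sub_cancel, one_pow]

lemma sampleProb_nonneg (h0 : 0 ≤ α) (h1 : α ≤ 1) (E : Finset ι) (P : Finset ι → Prop) :
    0 ≤ sampleProb α E P :=
  Finset.sum_nonneg fun F _ => ite_nonneg (sampleWeight_nonneg h0 h1 E F) le_rfl

lemma sampleProb_congr {E : Finset ι} {P Q : Finset ι → Prop} (h : ∀ F ⊆ E, P F ↔ Q F) :
    sampleProb α E P = sampleProb α E Q :=
  Finset.sum_congr rfl fun F hF => by simp only [h F (Finset.mem_powerset.1 hF)]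

lemma sampleProb_mono (h0 : 0 ≤ α) (h1 : α ≤ 1) {E : Finset ι} {P Q : Finset ι → Prop}
    (h : ∀ F ⊆ E, P F → Q F) : sampleProb α E P ≤ sampleProb α E Q :=
  Finset.sum_le_sum fun F hF => by
    have := h F (Finset.mem_powerset.1 hF)
    have := sampleWeight_nonneg h0 h1 E F
    split_ifs <;> first | rfl | assumption | tauto

lemma sampleProb_le_add (h0 : 0 ≤ α) (h1 : α ≤ 1) {E : Finset ι} {P Q R : Finset ι → Prop}
    (h : ∀ F ⊆ E, P F → Q F ∨ R F) :
    sampleProb α E P ≤ sampleProb α E Q + sampleProb α E R := by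
  rw [sampleProb, sampleProb, sampleProb, ← Finset.sum_add_distrib]
  refine Finset.sum_le_sum fun F hF => ?_
  have := h F (Finset.mem_powerset.1 hF)
  have := sampleWeight_nonneg h0 h1 E F
  split_ifs <;> first | linarith | tauto

lemma sampleProb_exists_le_sum (h0 : 0 ≤ α) (h1 : α ≤ 1) {κ : Type*} (E : Finset ι)
    (s : Finset κ) (P : κ → Finset ι → Prop) :
    sampleProb α E (fun F => ∃ i ∈ s, P i F) ≤ ∑ i ∈ s, sampleProb α E (P i) := by
  simp only [sampleProb]
  rw [Finset.sum_comm]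
  refine Finset.sum_le_sum fun F _ => ?_
  have hterm (i : κ) : 0 ≤ if P i F then sampleWeight α E F else 0 :=
    ite_nonneg (sampleWeight_nonneg h0 h1 E F) le_rfl
  split_ifs with hP
  · obtain ⟨i, hi, hPi⟩ := hP
    simpa only [if_pos hPi] using Finset.single_le_sum (fun j _ => hterm j) hi
  · exact Finset.sum_nonneg fun i _ => hterm i

theorem Finset.sum_powerset_union {β : Type*} [AddCommMonoid β] {E S : Finset ι} (hd : Disjoint E S)
    (f : Finset ι → β) :
    ∑ F ∈ (E ∪ S).powerset, f F = ∑ G ∈ E.powerset, ∑ H ∈ S.powerset, f (G ∪ H) := by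
  rw [← Finset.sum_product']
  have hsplit {G H : Finset ι} (hG : G ⊆ E) (hH : H ⊆ S) : (G ∪ H) ∩ E = G ∧ (G ∪ H) ∩ S = H := by
    have hx (x : ι) : x ∈ E → x ∉ S := fun h => Finset.disjoint_left.1 hd h
    constructor <;> ext x <;> have := hx x <;> grind
  refine Finset.sum_nbij' (fun F => (F ∩ E, F ∩ S)) (fun p => p.1 ∪ p.2) ?_ ?_ ?_ ?_ ?_
  · simp
  · simp only [Finset.mem_product, Finset.mem_powerset]
    exact fun p hp => Finset.union_subset_union hp.1 hp.2
  · intro F hF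
    simp only [Finset.mem_powerset] at hF
    simp [← Finset.inter_union_distrib_left, Finset.inter_eq_left.2 hF]
  · rintro ⟨G, H⟩ hp
    simp only [Finset.mem_product, Finset.mem_powerset] at hp
    simp [hsplit hp.1 hp.2]
  · intro F hF
    simp only [Finset.mem_powerset] at hF
    simp [← Finset.inter_union_distrib_left, Finset.inter_eq_left.2 hF]

lemma sampleWeight_union {E S G H : Finset ι} (hd : Disjoint E S) (hG : G ⊆ E) (hH : H ⊆ S) :
    sampleWeight α (E ∪ S) (G ∪ H) = sampleWeight α E G * sampleWeight α S H := by
  have hsdiff : (E ∪ S) \ (G ∪ H) = E \ G ∪ S \ H := by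
    ext x
    have : x ∈ E → x ∉ S := fun h => Finset.disjoint_left.1 hd h
    grind
  rw [sampleWeight, sampleWeight, sampleWeight, hsdiff,
    Finset.card_union_of_disjoint (hd.mono hG hH),
    Finset.card_union_of_disjoint (hd.mono Finset.sdiff_subset Finset.sdiff_subset)]
  ring

lemma sampleProb_union {E S : Finset ι} (hd : Disjoint E S) (P : Finset ι → Prop) :
    sampleProb α (E ∪ S) P =
      ∑ H ∈ S.powerset, sampleWeight α S H * sampleProb α E (fun G => P (G ∪ H)) := by
  rw [sampleProb, Finset.sum_powerset_union hd, Finset.sum_comm]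
  refine Finset.sum_congr rfl fun H hH => ?_
  rw [sampleProb, Finset.mul_sum]
  refine Finset.sum_congr rfl fun G hG => ?_
  rw [sampleWeight_union hd (Finset.mem_powerset.1 hG) (Finset.mem_powerset.1 hH)]
  split_ifs <;> ring

lemma sampleProb_union_eq {E S : Finset ι} (hd : Disjoint E S) {P Q : Finset ι → Prop}
    (h : ∀ G ⊆ E, ∀ H ⊆ S, P (G ∪ H) ↔ Q G) :
    sampleProb α (E ∪ S) P = sampleProb α E Q :=
  calc sampleProb α (E ∪ S) P
      = ∑ H ∈ S.powerset, sampleWeight α S H * sampleProb α E Q := by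
        rw [sampleProb_union hd]
        exact Finset.sum_congr rfl fun H hH => by
          rw [sampleProb_congr fun G hG => h G hG H (Finset.mem_powerset.1 hH)]
    _ = sampleProb α E Q := by rw [← Finset.sum_mul, sum_sampleWeight, one_mul]

lemma sampleProb_inter_of_subset {E E' : Finset ι} (h : E ⊆ E') (Q : Finset ι → Prop) :
    sampleProb α E' (fun F => Q (F ∩ E)) = sampleProb α E Q := by
  rw [← Finset.union_sdiff_of_subset h]
  refine sampleProb_union_eq Finset.disjoint_sdiff fun G hG H hH => ?_
  have hHE : H ∩ E = ∅ := Finset.disjoint_iff_inter_eq_empty.1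
    (Finset.sdiff_disjoint.mono_left hH)
  rw [Finset.union_inter_distrib_right, Finset.inter_eq_left.2 hG, hHE, Finset.union_empty]

lemma pow_card_mul_sampleProb_le (h0 : 0 ≤ α) (h1 : α ≤ 1) {E T : Finset ι} (hT : T ⊆ E)
    (P : Finset ι → Prop) :
    α ^ T.card * sampleProb α E (fun F => P (F ∪ T)) ≤ sampleProb α E P := by
  -- keep only the outcomes that retain all of `T`; their `T`-part has weight `α ^ #T`
  have hd : Disjoint (E \ T) T := Finset.sdiff_disjoint
  rw [← Finset.sdiff_union_of_subset hT,
    sampleProb_union_eq hd (Q := fun G => P (G ∪ T)) fun G _ H hH => by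
      rw [Finset.union_assoc, Finset.union_eq_right.2 hH],
    sampleProb_union hd P]
  calc α ^ T.card * sampleProb α (E \ T) (fun G => P (G ∪ T))
      = sampleWeight α T T * sampleProb α (E \ T) (fun G => P (G ∪ T)) := by
        simp [sampleWeight]
    _ ≤ _ := Finset.single_le_sum
        (f := fun H => sampleWeight α T H * sampleProb α (E \ T) (fun G => P (G ∪ H)))
        (fun H _ => mul_nonneg (sampleWeight_nonneg h0 h1 T H) (sampleProb_nonneg h0 h1 _ _))
        (Finset.mem_powerset_self T)

end Sampling

namespace SimpleGraph

variable {V : Type*}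

theorem Reachable.or_exists_reachable_mem {G H : SimpleGraph V} {W : Set V}
    (hHG : ∀ x y, H.Adj x y → G.Adj x y ∨ x ∈ W ∧ y ∈ W) {u v : V} (h : H.Reachable u v) :
    G.Reachable u v ∨ (∃ a ∈ W, G.Reachable u a) ∧ ∃ b ∈ W, G.Reachable v b := by
  obtain ⟨p⟩ := h
  induction p with
  | nil => exact Or.inl .rfl
  | @cons u x v hux _ ih =>
    rcases hHG u x hux with hG | ⟨hu, hx⟩
    · rcases ih with hxv | ⟨⟨a, ha, hxa⟩, hb⟩
      · exact Or.inl (hG.reachable.trans hxv)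
      · exact Or.inr ⟨⟨a, ha, hG.reachable.trans hxa⟩, hb⟩
    · refine Or.inr ⟨⟨u, hu, .rfl⟩, ?_⟩
      rcases ih with hxv | ⟨_, hb⟩
      · exact ⟨x, hx, hxv.symm⟩
      · exact hb

end SimpleGraph

section Star

open SimpleGraph

variable {V : Type*} [DecidableEq V]

def starEdges (w : V) (A : Finset V) : Finset (Sym2 V) :=
  (A.erase w).image (s(w, ·))

lemma starEdges_mono (w : V) {A B : Finset V} (h : A ⊆ B) : starEdges w A ⊆ starEdges w B :=
  Finset.image_subset_image (Finset.erase_subset_erase w h)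

lemma card_starEdges_le (w : V) (A : Finset V) : (starEdges w A).card ≤ (A.erase w).card :=
  Finset.card_image_le

lemma mem_of_mem_starEdges {w : V} {A : Finset V} {e : Sym2 V} (he : e ∈ starEdges w A) :
    w ∈ e := by
  obtain ⟨x, -, rfl⟩ := Finset.mem_image.1 he
  exact Sym2.mem_mk_left w x

lemma reachable_of_starEdges_subset {w x : V} {A : Finset V} {F : Finset (Sym2 V)}
    (h : starEdges w A ⊆ F) (hx : x ∈ A) : (fromEdgeSet (F : Set (Sym2 V))).Reachable w x := by
  by_cases hxw : x = w
  · rw [hxw]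
  · refine Adj.reachable ((fromEdgeSet_adj _).2 ⟨?_, Ne.symm hxw⟩)
    exact Finset.mem_coe.2 (h (Finset.mem_image_of_mem _ (Finset.mem_erase.2 ⟨hxw, hx⟩)))

lemma Sym2.card_toFinset_le_two (e : Sym2 V) : e.toFinset.card ≤ 2 := by
  rw [Sym2.card_toFinset]
  split_ifs <;> norm_num

end Star

section Proximity

open SimpleGraph

variable {α : ℝ}

lemma prox_eq_sampleProb (E : Finset (Sym2 V)) (α : ℝ) (u v : V) :
    prox E α u v = sampleProb α E (fun F => (fromEdgeSet (F : Set (Sym2 V))).Reachable u v) := by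
  unfold prox sampleProb sampleWeight
  -- the two `if`s are decided by different instances
  congr! 3

lemma prox_nonneg (h0 : 0 ≤ α) (h1 : α ≤ 1) (E : Finset (Sym2 V)) (u v : V) :
    0 ≤ prox E α u v := by
  rw [prox_eq_sampleProb]
  exact sampleProb_nonneg h0 h1 E _

lemma prox_mono (h0 : 0 ≤ α) (h1 : α ≤ 1) {E E' : Finset (Sym2 V)} (h : E ⊆ E') (u v : V) :
    prox E α u v ≤ prox E' α u v := by
  rw [prox_eq_sampleProb, prox_eq_sampleProb, ← sampleProb_inter_of_subset h]
  refine sampleProb_mono h0 h1 fun F _ hr => hr.mono (fromEdgeSet_mono ?_)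
  exact_mod_cast Finset.inter_subset_left

lemma broadcast_le_prox (h0 : 0 ≤ α) (h1 : α ≤ 1) (E : Finset (Sym2 V)) {u v : V}
    (huv : u ≠ v) : broadcast E α ≤ prox E α u v :=
  ciInf_le ⟨0, Set.forall_mem_range.2 fun _ => prox_nonneg h0 h1 E _ _⟩
    (⟨(u, v), huv⟩ : {p : V × V // p.1 ≠ p.2})

lemma le_broadcast [Nontrivial V] {E : Finset (Sym2 V)} {c : ℝ}
    (h : ∀ u v, u ≠ v → c ≤ prox E α u v) : c ≤ broadcast E α := by
  obtain ⟨u, v, huv⟩ := exists_pair_ne V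
  have : Nonempty {p : V × V // p.1 ≠ p.2} := ⟨⟨(u, v), huv⟩⟩
  exact le_ciInf fun p => h _ _ p.2

lemma broadcast_of_subsingleton [Subsingleton V] (E : Finset (Sym2 V)) (α : ℝ) :
    broadcast E α = 0 := by
  have : IsEmpty {p : V × V // p.1 ≠ p.2} := ⟨fun p => p.2 (Subsingleton.elim _ _)⟩
  exact Real.iInf_of_isEmpty _

lemma exists_optBroadcast_le_broadcast (E : Finset (Sym2 V)) (α : ℝ) (k : ℕ) :
    ∃ F : Finset (Sym2 V), F.card ≤ k ∧ optBroadcast E α k ≤ broadcast (E ∪ F) α := by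
  have : Nonempty {F : Finset (Sym2 V) // F.card ≤ k ∧ ∀ e ∈ F, e ∉ E} := ⟨⟨∅, by simp⟩⟩
  obtain ⟨F, hF⟩ := Finite.exists_max
    fun F : {F : Finset (Sym2 V) // F.card ≤ k ∧ ∀ e ∈ F, e ∉ E} => broadcast (E ∪ F.1) α
  exact ⟨F.1, F.2.1, ciSup_le hF⟩

lemma prox_union_le (h0 : 0 ≤ α) (h1 : α ≤ 1) (E F : Finset (Sym2 V)) (u v : V) :
    prox (E ∪ F) α u v ≤ prox E α u v + sampleProb α E (fun G =>
      (∃ a ∈ F.biUnion Sym2.toFinset, (fromEdgeSet (G : Set (Sym2 V))).Reachable u a) ∧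
      ∃ b ∈ F.biUnion Sym2.toFinset, (fromEdgeSet (G : Set (Sym2 V))).Reachable v b) := by
  rw [prox_eq_sampleProb, prox_eq_sampleProb,
    ← sampleProb_inter_of_subset (E' := E ∪ F) Finset.subset_union_left,
    ← sampleProb_inter_of_subset (E' := E ∪ F) Finset.subset_union_left]
  refine sampleProb_le_add h0 h1 fun G hG hr =>
    hr.or_exists_reachable_mem (W := ↑(F.biUnion Sym2.toFinset)) fun x y hxy => ?_
  obtain ⟨hxy, hne⟩ := (fromEdgeSet_adj _).1 hxy
  rcases Finset.mem_union.1 (hG hxy) with hE | hF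
  · exact Or.inl ((fromEdgeSet_adj _).2 ⟨Finset.mem_inter.2 ⟨hxy, hE⟩, hne⟩)
  · exact Or.inr ⟨Finset.mem_biUnion.2 ⟨_, hF, by simp⟩, Finset.mem_biUnion.2 ⟨_, hF, by simp⟩⟩

lemma sq_mul_sampleProb_le_prox_union_starEdges (h0 : 0 ≤ α) (h1 : α ≤ 1)
    (E : Finset (Sym2 V)) (w : V) {W : Finset V} {u v a b : V} (ha : a ∈ W) (hb : b ∈ W) :
    α ^ 2 * sampleProb α E (fun G => (fromEdgeSet (G : Set (Sym2 V))).Reachable u a ∧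
      (fromEdgeSet (G : Set (Sym2 V))).Reachable v b) ≤ prox (E ∪ starEdges w W) α u v := by
  set T := starEdges w {a, b}
  have hT : T ⊆ E ∪ starEdges w W :=
    (starEdges_mono w (by simp [Finset.insert_subset_iff, ha, hb])).trans
      Finset.subset_union_right
  have hTcard : T.card ≤ 2 :=
    (card_starEdges_le w _).trans (Finset.card_erase_le.trans Finset.card_le_two)
  rw [prox_eq_sampleProb, ← sampleProb_inter_of_subset (E' := E ∪ starEdges w W)
    Finset.subset_union_left]
  calc α ^ 2 * sampleProb α (E ∪ starEdges w W) _
      ≤ α ^ T.card * sampleProb α (E ∪ starEdges w W)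
          (fun F => (fromEdgeSet ((F ∪ T : Finset (Sym2 V)) : Set (Sym2 V))).Reachable u v) := by
        refine mul_le_mul (pow_le_pow_of_le_one h0 h1 hTcard) (sampleProb_mono h0 h1 ?_)
          (sampleProb_nonneg h0 h1 _ _) (pow_nonneg h0 _)
        rintro F - ⟨hua, hvb⟩
        have hsub : fromEdgeSet ((F ∩ E : Finset (Sym2 V)) : Set (Sym2 V))
            ≤ fromEdgeSet ((F ∪ T : Finset (Sym2 V)) : Set (Sym2 V)) :=
          fromEdgeSet_mono <| by
            exact_mod_cast Finset.inter_subset_left.trans Finset.subset_union_left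
        have hwa := reachable_of_starEdges_subset (F := F ∪ T) Finset.subset_union_right
          (Finset.mem_insert_self a {b})
        have hwb := reachable_of_starEdges_subset (F := F ∪ T) Finset.subset_union_right
          (Finset.mem_insert_of_mem (Finset.mem_singleton_self b))
        exact (hua.mono hsub).trans (hwa.symm.trans (hwb.trans (hvb.mono hsub).symm))
    _ ≤ _ := pow_card_mul_sampleProb_le h0 h1 hT
        fun F => (fromEdgeSet (F : Set (Sym2 V))).Reachable u v

lemma sq_mul_sampleProb_le_card_sq_mul_prox (h0 : 0 ≤ α) (h1 : α ≤ 1)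
    (E : Finset (Sym2 V)) (w : V) (W : Finset V) (u v : V) :
    α ^ 2 * sampleProb α E (fun G =>
      (∃ a ∈ W, (fromEdgeSet (G : Set (Sym2 V))).Reachable u a) ∧
      ∃ b ∈ W, (fromEdgeSet (G : Set (Sym2 V))).Reachable v b)
      ≤ W.card ^ 2 * prox (E ∪ starEdges w W) α u v :=
  calc α ^ 2 * sampleProb α E _
      ≤ α ^ 2 * ∑ p ∈ W ×ˢ W, sampleProb α E (fun G =>
          (fromEdgeSet (G : Set (Sym2 V))).Reachable u p.1 ∧
          (fromEdgeSet (G : Set (Sym2 V))).Reachable v p.2) := by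
        refine mul_le_mul_of_nonneg_left ((sampleProb_mono h0 h1 ?_).trans
          (sampleProb_exists_le_sum h0 h1 E _ _)) (sq_nonneg α)
        rintro G - ⟨⟨a, ha, hua⟩, b, hb, hvb⟩
        exact ⟨(a, b), Finset.mem_product.2 ⟨ha, hb⟩, hua, hvb⟩
    _ ≤ ∑ _p ∈ W ×ˢ W, prox (E ∪ starEdges w W) α u v := by
        rw [Finset.mul_sum]
        exact Finset.sum_le_sum fun p hp => sq_mul_sampleProb_le_prox_union_starEdges h0 h1 E w
          (Finset.mem_product.1 hp).1 (Finset.mem_product.1 hp).2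
    _ = W.card ^ 2 * prox (E ∪ starEdges w W) α u v := by
        rw [Finset.sum_const, Finset.card_product, nsmul_eq_mul]
        push_cast
        ring

theorem prox_union_mul_sq_le (h0 : 0 ≤ α) (h1 : α ≤ 1) (E F : Finset (Sym2 V)) (w u v : V) :
    prox (E ∪ F) α u v * α ^ 2 ≤ ((F.biUnion Sym2.toFinset).card ^ 2 + 1) *
      prox (E ∪ starEdges w (F.biUnion Sym2.toFinset)) α u v := by
  set W := F.biUnion Sym2.toFinset
  set t := prox (E ∪ starEdges w W) α u v
  have hsq : α ^ 2 ≤ 1 := pow_le_one₀ h0 h1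
  have hE : prox E α u v ≤ t := prox_mono h0 h1 Finset.subset_union_left u v
  have hE0 := prox_nonneg h0 h1 E u v
  calc prox (E ∪ F) α u v * α ^ 2
      ≤ (prox E α u v + sampleProb α E _) * α ^ 2 :=
        mul_le_mul_of_nonneg_right (prox_union_le h0 h1 E F u v) (sq_nonneg α)
    _ ≤ prox E α u v + W.card ^ 2 * t := by
        have := sq_mul_sampleProb_le_card_sq_mul_prox h0 h1 E w W u v
        nlinarith
    _ ≤ (W.card ^ 2 + 1) * t := by linarith

open Finset in
/-- star-structure theorem. There are at most `2k - 1` new edges,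
all incident to a single shared vertex, achieving broadcast at least
`β* α² / (12k² + 3)`. -/
theorem star_structure
    [Nonempty V]
    (E : Finset (Sym2 V)) (α : ℝ) (hα0 : 0 ≤ α) (hα1 : α ≤ 1) (k : ℕ) :
    ∃ (w : V) (S : Finset (Sym2 V)), S.card ≤ 2 * k - 1 ∧
      (∀ e ∈ S, e ∉ E ∧ w ∈ e) ∧
      optBroadcast E α k * α ^ 2 / (12 * (k : ℝ) ^ 2 + 3) ≤
        broadcast (E ∪ S) α := by
  rcases subsingleton_or_nontrivial V with hV | hV
  · refine ⟨Classical.arbitrary V, ∅, by simp, by simp, ?_⟩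
    simp [optBroadcast, broadcast_of_subsingleton]
  obtain ⟨F, hFk, hopt⟩ := exists_optBroadcast_le_broadcast E α k
  set W := F.biUnion Sym2.toFinset
  have hW : W.card ≤ 2 * k :=
    (card_biUnion_le_card_mul F _ 2 fun e _ => e.card_toFinset_le_two).trans (by omega)
  obtain ⟨w, hw⟩ : ∃ w, (W.erase w).card ≤ 2 * k - 1 := by
    rcases W.eq_empty_or_nonempty with hW0 | ⟨w, hw⟩
    · exact ⟨Classical.arbitrary V, by simp [hW0]⟩
    · refine ⟨w, ?_⟩
      rw [card_erase_of_mem hw]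
      omega
  refine ⟨w, starEdges w W \ E, (card_le_card sdiff_subset).trans
    ((card_starEdges_le w W).trans hw), fun e he => ⟨(mem_sdiff.1 he).2,
    mem_of_mem_starEdges (mem_sdiff.1 he).1⟩, ?_⟩
  rw [union_sdiff_self_eq_union]
  refine le_broadcast fun u v huv => ?_
  rw [div_le_iff₀' (by positivity)]
  calc optBroadcast E α k * α ^ 2 ≤ prox (E ∪ F) α u v * α ^ 2 :=
        mul_le_mul_of_nonneg_right (hopt.trans (broadcast_le_prox hα0 hα1 _ huv)) (sq_nonneg α)
    _ ≤ (W.card ^ 2 + 1) * prox (E ∪ starEdges w W) α u v :=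
        prox_union_mul_sq_le hα0 hα1 E F w u v
    _ ≤ (12 * k ^ 2 + 3) * prox (E ∪ starEdges w W) α u v := by
        have hW' : (W.card : ℝ) ≤ 2 * k := by exact_mod_cast hW
        refine mul_le_mul_of_nonneg_right ?_ (prox_nonneg hα0 hα1 _ u v)
        nlinarith [W.card.cast_nonneg (α := ℝ)]
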